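/- Let L/K be a differential field extension of fields of characteristic p > 0. Then the following are equivalent: (1) L/K is a separable field extension; (2) the field of constants C_K and L^p are linearly disjoint over K^p. -/

import Mathlib

/-!
The direction (1) ⇒ (2) is a specialisation. For the converse, linear disjointness is transitive
along the towers `K^p ⊆ C_K ⊆ K` and `L^p ⊆ C_L`: by hypothesis `C_K` and `L^p` are linearly
disjoint over `K^p`, and `K` and `C_L` are linearly disjoint over `C_K` by the Wronskian criterion
(a finite family is linearly independent over the constants iff its Wronskian is nonzero), since
the Wronskian of a family in `K` is the same computed in `L`. As `L^p ⊆ C_L`, `K` and `L^p` are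
linearly disjoint over `K^p`.
-/

theorem Subfield.linearIndependent_iff {K ι : Type*} [Field K] [Fintype ι] {S : Subfield K}
    {v : ι → K} :
    LinearIndependent S v ↔ ∀ c : ι → K, (∀ i, c i ∈ S) → ∑ i, c i * v i = 0 → ∀ i, c i = 0 := by
  rw [Fintype.linearIndependent_iff]
  exact ⟨fun h c hc hsum i => congrArg Subtype.val (h (fun i => ⟨c i, hc i⟩) hsum i),
    fun h g hg i => Subtype.ext (h (fun i => g i) (fun i => (g i).2) hg i)⟩

theorem Subfield.exists_linearIndependent_fin_sum_eq {K ι : Type*} [Field K] [Finite ι]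
    (S : Subfield K) (x : ι → K) :
    ∃ (m : ℕ) (y : Fin m → K) (c : ι → Fin m → K), LinearIndependent S y ∧
      (∀ j, y j ∈ Set.range x) ∧ (∀ i j, c i j ∈ S) ∧ ∀ i, x i = ∑ j, c i j * y j := by
  obtain ⟨t, hts, hspan, ht⟩ := exists_linearIndependent S (Set.range x)
  have : Fintype t := ((Set.finite_range x).subset hts).fintype
  let e := Fintype.equivFin t
  have hrange : Set.range (fun j => (e.symm j : K)) = t := by
    rw [← Function.comp_def, e.symm.surjective.range_comp, Subtype.range_coe]
  have hx : ∀ i, x i ∈ Submodule.span S (Set.range fun j => (e.symm j : K)) := fun i => by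
    rw [hrange, hspan]
    exact Submodule.subset_span (Set.mem_range_self i)
  choose c hc using fun i => (Submodule.mem_span_range_iff_exists_fun S).mp (hx i)
  exact ⟨_, _, fun i j => c i j, ht.comp _ e.symm.injective, fun j => hts (e.symm j).2,
    fun i j => (c i j).2, fun i => (hc i).symm⟩

theorem sum_mul_sum_mul_comm {R ι κ : Type*} [CommSemiring R] [Fintype ι] [Fintype κ]
    (μ : ι → R) (c : ι → κ → R) (y : κ → R) :
    ∑ i, μ i * ∑ j, c i j * y j = ∑ j, (∑ i, μ i * c i j) * y j :=
  Matrix.dotProduct_mulVec μ (Matrix.of c) y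

section Tower

variable {K L : Type*} [Field K] [Field L] [Algebra K L]

theorem Subfield.eq_zero_of_sum_mul_algebraMap_eq_zero {F : Subfield K} {E : Subfield L}
    (hFE : ∀ a ∈ F, algebraMap K L a ∈ E) {ι κ : Type*} [Fintype ι] [Finite κ] {a : ι → κ → K}
    (haF : ∀ i k, a i k ∈ F)
    (ha : ∀ μ : ι → K, (∀ i, μ i ∈ F) → (∀ k, ∑ i, μ i * a i k = 0) → ∀ i, μ i = 0)
    {b : ι → L} (hbE : ∀ i, b i ∈ E) (hb : ∀ k, ∑ i, b i * algebraMap K L (a i k) = 0) :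
    ∀ i, b i = 0 := by
  let _ : Algebra F E := ((algebraMap K L).restrict F E hFE).toAlgebra
  let a' : ι → κ → F := fun i k => ⟨a i k, haF i k⟩
  have ha' : LinearIndependent F a' := Fintype.linearIndependent_iff.mpr fun μ hμ i =>
    Subtype.ext (ha (fun i => μ i) (fun i => (μ i).2) (fun k => by
      simpa [a', Finset.sum_apply] using congrArg Subtype.val (congrFun hμ k)) i)
  have haE : LinearIndependent E fun i => algebraMap F E ∘ a' i :=
    linearIndependent_algebraMap_comp_iff.mpr ha'
  have hbE' := Fintype.linearIndependent_iff.mp haE (fun i => ⟨b i, hbE i⟩)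
    (funext fun k => Subtype.ext (by
      simpa [a', Finset.sum_apply, RingHom.algebraMap_toAlgebra] using hb k))
  exact fun i => congrArg Subtype.val (hbE' i)

theorem Subfield.linearIndependent_algebraMap_of_tower {F C : Subfield K} {E D : Subfield L}
    (hFE : ∀ a ∈ F, algebraMap K L a ∈ E) (hED : E ≤ D) (hCD : ∀ a ∈ C, algebraMap K L a ∈ D)
    (hC : ∀ (n : ℕ) (v : Fin n → K), (∀ i, v i ∈ C) → LinearIndependent F v →
      LinearIndependent E (algebraMap K L ∘ v))
    (hK : ∀ (n : ℕ) (v : Fin n → K), LinearIndependent C v →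
      LinearIndependent D (algebraMap K L ∘ v))
    {ι : Type*} [Fintype ι] {x : ι → K} (hx : LinearIndependent F x) :
    LinearIndependent E (algebraMap K L ∘ x) := by
  set f := algebraMap K L
  -- expand `x` over a `C`-basis `y` of its `C`-span, then the coefficients `c` over an `F`-basis
  -- `e` of their `F`-span; the coefficients `a` of the second expansion are `F`-independent rows
  obtain ⟨m, y, c, hy, -, hcC, hxc⟩ := C.exists_linearIndependent_fin_sum_eq x
  obtain ⟨s, e, a, he, heC, haF, hce⟩ :=
    F.exists_linearIndependent_fin_sum_eq fun q : ι × Fin m => c q.1 q.2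
  have hce' : ∀ i j, c i j = ∑ u, a (i, j) u * e u := fun i j => hce (i, j)
  refine Subfield.linearIndependent_iff.mpr fun b hbE hb => ?_
  have hbc : ∀ j, ∑ i, b i * f (c i j) = 0 := by
    refine Subfield.linearIndependent_iff.mp (hK m y hy) _
      (fun j => sum_mem fun i _ => mul_mem (hED (hbE i)) (hCD _ (hcC i j))) ?_
    rw [← sum_mul_sum_mul_comm, ← hb]
    simp [hxc]
  have hba : ∀ j u, ∑ i, b i * f (a (i, j) u) = 0 := by
    intro j
    have heC' : ∀ u, e u ∈ C := fun u => by
      obtain ⟨q, hq⟩ := heC u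
      exact hq ▸ hcC q.1 q.2
    refine Subfield.linearIndependent_iff.mp (hC s e heC' he) _
      (fun u => sum_mem fun i _ => mul_mem (hbE i) (hFE _ (haF _ u))) ?_
    rw [← sum_mul_sum_mul_comm, ← hbc j]
    simp [hce']
  have ha : ∀ μ : ι → K, (∀ i, μ i ∈ F) → (∀ q : Fin m × Fin s, ∑ i, μ i * a (i, q.1) q.2 = 0) →
      ∀ i, μ i = 0 := by
    intro μ hμ hμa
    have hμc : ∀ j, ∑ i, μ i * c i j = 0 := fun j => by
      simp_rw [hce', sum_mul_sum_mul_comm, fun u => hμa (j, u), zero_mul, Finset.sum_const_zero]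
    refine Subfield.linearIndependent_iff.mp hx μ hμ ?_
    simp_rw [hxc, sum_mul_sum_mul_comm, hμc, zero_mul, Finset.sum_const_zero]
  exact Subfield.eq_zero_of_sum_mul_algebraMap_eq_zero hFE (a := fun i (q : Fin m × Fin s) =>
    a (i, q.1) q.2) (fun i q => haF _ q.2) ha hbE fun q => hba q.1 q.2

end Tower

open Matrix

namespace Derivation

variable {R M : Type*} [CommRing R] [Field M] [Algebra R M] (d : Derivation R M M)

def constants : Subfield M where
  carrier := {a | d a = 0}
  mul_mem' {a b} ha hb := by simp_all [leibniz]
  one_mem' := map_one_eq_zero d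
  add_mem' {a b} ha hb := by simp_all
  zero_mem' := d.map_zero
  neg_mem' {a} ha := by simp_all
  inv_mem' {a} ha := by simp_all [leibniz_inv]

@[simp]
theorem mem_constants {a : M} : a ∈ d.constants ↔ d a = 0 := Iff.rfl

def wronskian {m : ℕ} (y : Fin m → M) : Matrix (Fin m) (Fin m) M :=
  Matrix.of fun i j => d^[i] (y j)

theorem wronskian_mulVec_apply {m : ℕ} (y : Fin m → M) (v : Fin m → M) (i : Fin m) :
    (d.wronskian y *ᵥ v) i = ∑ j, d^[i] (y j) * v j := rfl

theorem iterate_sum_mul_of_mem_constants {ι : Type*} (s : Finset ι) (y c : ι → M)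
    (hc : ∀ j, c j ∈ d.constants) (i : ℕ) :
    d^[i] (∑ j ∈ s, y j * c j) = ∑ j ∈ s, d^[i] (y j) * c j := by
  induction i with
  | zero => rfl
  | succ i ih =>
    rw [Function.iterate_succ_apply', ih, map_sum]
    refine Finset.sum_congr rfl fun j _ => ?_
    rw [leibniz, (mem_constants d).mp (hc j), smul_zero, zero_add, smul_eq_mul, mul_comm,
      Function.iterate_succ_apply']

theorem sum_map_mul_iterate_eq_zero {ι : Type*} (s : Finset ι) (y b : ι → M) {i : ℕ}
    (h : ∑ j ∈ s, d^[i] (y j) * b j = 0) (hsucc : ∑ j ∈ s, d^[i + 1] (y j) * b j = 0) :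
    ∑ j ∈ s, d^[i] (y j) * d (b j) = 0 := by
  have hd : ∑ j ∈ s, (d^[i] (y j) * d (b j) + d^[i + 1] (y j) * b j) = 0 := by
    rw [← d.map_zero, ← h, map_sum]
    refine Finset.sum_congr rfl fun j _ => ?_
    rw [leibniz, smul_eq_mul, smul_eq_mul, Function.iterate_succ_apply', mul_comm (b j)]
  rwa [Finset.sum_add_distrib, hsucc, add_zero] at hd

theorem det_wronskian_ne_zero_of_linearIndependent :
    ∀ {m : ℕ} {y : Fin m → M}, LinearIndependent d.constants y → (d.wronskian y).det ≠ 0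
  | 0, _, _ => by simp
  | m + 1, y, hy => by
    have hW' := det_wronskian_ne_zero_of_linearIndependent (hy.comp _ (Fin.castSucc_injective m))
    intro hdet
    obtain ⟨a, ha0, ha⟩ := exists_mulVec_eq_zero_iff.mpr hdet
    have castSucc_eq_zero : ∀ v : Fin (m + 1) → M, v (Fin.last m) = 0 →
        (∀ i : Fin m, ∑ j, d^[i] (y j) * v j = 0) → ∀ j : Fin m, v j.castSucc = 0 := by
      intro v hv h
      refine congrFun (eq_zero_of_mulVec_eq_zero hW' (v := v ∘ Fin.castSucc) (funext fun i => ?_))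
      simpa [wronskian_mulVec_apply, Fin.sum_univ_castSucc, hv] using h i
    have hlast : a (Fin.last m) ≠ 0 := fun h0 =>
      ha0 (funext (Fin.lastCases h0 (castSucc_eq_zero a h0 fun i => congrFun ha i.castSucc)))
    set b := (a (Fin.last m))⁻¹ • a
    have hb : d.wronskian y *ᵥ b = 0 := by rw [mulVec_smul, ha, smul_zero]
    have hblast : b (Fin.last m) = 1 := inv_mul_cancel₀ hlast
    -- differentiating the relations `∑ j, d^[i] (y j) * b j = 0` puts `d ∘ b` in the kernel of
    -- the smaller Wronskian, since `b (Fin.last m) = 1` is constant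
    have hdb : ∀ j, d (b j) = 0 := Fin.lastCases (by rw [hblast, map_one_eq_zero])
      (castSucc_eq_zero (fun j => d (b j)) (by simp [hblast]) fun i =>
        d.sum_map_mul_iterate_eq_zero _ y b (congrFun hb i.castSucc) (congrFun hb i.succ))
    have hrel : ∑ j, b j * y j = 0 := by
      simpa [wronskian_mulVec_apply, mul_comm] using congrFun hb 0
    exact one_ne_zero (hblast ▸ Subfield.linearIndependent_iff.mp hy b hdb hrel (Fin.last m))

theorem linearIndependent_constants_iff_det_wronskian_ne_zero {m : ℕ} {y : Fin m → M} :
    LinearIndependent d.constants y ↔ (d.wronskian y).det ≠ 0 := by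
  refine ⟨d.det_wronskian_ne_zero_of_linearIndependent, fun hdet => ?_⟩
  refine Subfield.linearIndependent_iff.mpr fun c hc hsum =>
    congrFun (eq_zero_of_mulVec_eq_zero hdet (funext fun i => ?_))
  rw [wronskian_mulVec_apply, ← d.iterate_sum_mul_of_mem_constants _ y c hc]
  simp_rw [mul_comm (y _), hsum]
  exact Function.iterate_fixed d.map_zero i

theorem wronskian_algebraMap {K L : Type*} [Field K] [Field L] [Algebra K L] [Algebra R K]
    [Algebra R L] (δ : Derivation R K K) (δL : Derivation R L L)
    (hcomp : ∀ a, δL (algebraMap K L a) = algebraMap K L (δ a)) {m : ℕ} (y : Fin m → K) :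
    δL.wronskian (algebraMap K L ∘ y) = (algebraMap K L).mapMatrix (δ.wronskian y) := by
  ext i j
  exact ((Function.Semiconj.iterate_right (fun a => (hcomp a).symm) i) (y j)).symm

theorem linearIndependent_constants_algebraMap {K L : Type*} [Field K] [Field L] [Algebra K L]
    [Algebra R K] [Algebra R L] (δ : Derivation R K K) (δL : Derivation R L L)
    (hcomp : ∀ a, δL (algebraMap K L a) = algebraMap K L (δ a)) {m : ℕ} {y : Fin m → K}
    (hy : LinearIndependent δ.constants y) :
    LinearIndependent δL.constants (algebraMap K L ∘ y) := by
  rw [linearIndependent_constants_iff_det_wronskian_ne_zero] at hy ⊢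
  rw [wronskian_algebraMap δ δL hcomp, ← RingHom.map_det]
  exact (map_ne_zero _).mpr hy

end Derivation

theorem stmt14 {K L : Type*} [Field K] [Field L] [Algebra K L]
    (p : ℕ) [Fact p.Prime] [CharP K p] [CharP L p]
    (δ : Derivation ℤ K K) (δL : Derivation ℤ L L)
    (hcomp : ∀ a : K, δL (algebraMap K L a) = algebraMap K L (δ a)) :
    (∀ (n : ℕ) (v : Fin n → K),
        LinearIndependent ((frobenius K p).fieldRange) v →
        LinearIndependent ((frobenius L p).fieldRange) fun i => algebraMap K L (v i)) ↔
    (∀ (n : ℕ) (v : Fin n → K), (∀ i, δ (v i) = 0) →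
        LinearIndependent ((frobenius K p).fieldRange) v →
        LinearIndependent ((frobenius L p).fieldRange) fun i => algebraMap K L (v i)) := by
  refine ⟨fun h n v _ => h n v, fun h n x hx => ?_⟩
  refine Subfield.linearIndependent_algebraMap_of_tower (C := δ.constants) (D := δL.constants)
    ?_ ?_ ?_ h (fun n v => δ.linearIndependent_constants_algebraMap δL hcomp) hx
  · rintro _ ⟨a, rfl⟩
    exact ⟨algebraMap K L a, by simp [frobenius_def]⟩
  · rintro _ ⟨a, rfl⟩
    simp [frobenius_def, Derivation.leibniz_pow]
  · intro a (ha : δ a = 0)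
    rw [Derivation.mem_constants, hcomp, ha, map_zero]
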